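/- Fix 1 ≤ m ≤ M, an integer ℓ with |ℓ| ≤ (log y)/2, and a nonnegative integer n_m, and let t ∈ ℝ be such that |Re D_{m,ℓ}(t)| ∈ I_{n_m}^{(m)}. Then R_{m,ℓ}(t)^{1/(k−1)} ≤ (1 + C e^{−J_m}) U_{m,ℓ}(t) for an absolute constant C > 0. -/

import Mathlib

/-!
Write `κ = k - 1`, `D = Re D_{m,ℓ}(t)` and `E_J` for the degree-`J` Taylor polynomial of `exp`,
so that `R_{m,ℓ}(t)^{1/κ} = |E_J(κD)|^{2/κ}`. If `|D| ≤ J/(100k)`, both `E_J(κD)` and `E_J(D)`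
approximate `exp(κD)` and `exp(D)` within relative error `e^{-(2J+1)}`, and
`exp(κD)^{2/κ} = exp(D)^2`. If `A ≤ |D| ≤ 2A`, then `|E_J(κD)| ≤ E_J(κ|D|)` is at most
`exp(2κA)`, and, once `κ|D| ≥ 2J` makes every term at least twice the previous one, at most
twice its last term; the extra factor `|D_{m,ℓ}(t)/A|^{a_m}` is at least `1`.
-/

open MeasureTheory Finset

/-- The Dirichlet polynomial
`D_{m,ℓ}(t) = ∑_{y_{m-1} < p ≤ y_m} ( p^{-1/2-it-iℓ/log y} + (1/2) p^{-1-2it-2iℓ/log y} )`,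
where `Y : ℕ → ℝ` is the subdivision `y₀ < y₁ < ⋯ < y_M` of `[1, y]`. -/
noncomputable def Dpoly (y : ℝ) (Y : ℕ → ℝ) (m : ℕ) (l : ℤ) (t : ℝ) : ℂ :=
  ∑ p ∈ (Finset.Icc 1 ⌊Y m⌋₊).filter (fun p => Nat.Prime p ∧ Y (m - 1) < (p : ℝ)),
    ((p : ℂ) ^ (-(1/2 : ℂ) - Complex.I * (t : ℂ) - Complex.I * (l : ℂ) / (Real.log y : ℂ))
      + (1/2) * (p : ℂ) ^ (-(1 : ℂ) - 2 * Complex.I * (t : ℂ)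
          - 2 * Complex.I * (l : ℂ) / (Real.log y : ℂ)))

/-- The truncated exponential
`R_{m,ℓ}(t) = ( ∑_{j=0}^{J_m} ((k-1)^j/j!) (Re D_{m,ℓ}(t))^j )²`. -/
noncomputable def Rml (k y : ℝ) (Y : ℕ → ℝ) (J : ℕ → ℕ) (m : ℕ) (l : ℤ) (t : ℝ) : ℝ :=
  (∑ j ∈ Finset.range (J m + 1),
    (k - 1) ^ j / (Nat.factorial j : ℝ) * (Dpoly y Y m l t).re ^ j) ^ 2

/-- The interval `I_n^{(m)}`: `I₀^{(m)} = [0, J_m/(100k)]` and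
`I_n^{(m)} = [2^{n-1} J_m/(100k), 2^n J_m/(100k)]` for `n ≥ 1`. -/
noncomputable def Iset (k : ℝ) (J : ℕ → ℕ) (m : ℕ) (n : ℕ) : Set ℝ :=
  if n = 0 then Set.Icc 0 ((J m : ℝ) / (100 * k))
  else Set.Icc (2 ^ (n - 1) * (J m : ℝ) / (100 * k)) (2 ^ n * (J m : ℝ) / (100 * k))

/-- The majorant `U_{m,ℓ}(t)`, defined case-by-case according to whether `n_m = 0`,
`J_m/(100k) ≤ A_m ≤ 100 k J_m`, or `A_m ≥ 100 k J_m`, where `A_m = inf I_{n_m}^{(m)}`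
and `a_m = 2⌈200 k J_m⌉`. -/
noncomputable def Uml (k y : ℝ) (Y : ℕ → ℝ) (J : ℕ → ℕ) (m : ℕ) (nm : ℕ) (l : ℤ)
    (t : ℝ) : ℝ :=
  let A : ℝ := sInf (Iset k J m nm)
  let a : ℕ := 2 * ⌈200 * k * (J m : ℝ)⌉₊
  if nm = 0 then
    (∑ j ∈ Finset.range (J m + 1), (Dpoly y Y m l t).re ^ j / (Nat.factorial j : ℝ)) ^ 2
  else if A ≤ 100 * k * (J m : ℝ) then
    Real.exp (4 * A) * ‖Dpoly y Y m l t / (A : ℂ)‖ ^ a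
  else
    (2 * (2 * (k - 1) * A) ^ (J m) / (Nat.factorial (J m) : ℝ)) ^ ((2:ℝ) / (k - 1))
      * ‖Dpoly y Y m l t / (A : ℂ)‖ ^ a

open Nat in
noncomputable def expTrunc (J : ℕ) (w : ℝ) : ℝ := ∑ j ∈ range (J + 1), w ^ j / (j ! : ℝ)

section expTrunc

open Real Nat

variable {J : ℕ}

lemma abs_expTrunc_mul_le {κ : ℝ} (hκ : 0 ≤ κ) (D : ℝ) :
    |expTrunc J (κ * D)| ≤ expTrunc J (κ * |D|) :=
  (abs_sum_le_sum_abs _ _).trans_eq <| sum_congr rfl fun j _ => by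
    rw [abs_div, abs_pow, abs_mul, abs_of_nonneg hκ, Nat.abs_cast]

lemma expTrunc_le_exp {w : ℝ} (hw : 0 ≤ w) : expTrunc J w ≤ exp w :=
  sum_le_exp_of_nonneg hw _

lemma expTrunc_le_two_mul_pow_div_factorial {c : ℝ} (hc : 2 * J ≤ c) :
    expTrunc J c ≤ 2 * c ^ J / J ! := by
  induction J with
  | zero => simp [expTrunc]
  | succ J ih =>
    push_cast at hc
    have hc0 : 0 ≤ c := by linarith
    have hlast : 2 * c ^ J / J ! ≤ c ^ (J + 1) / (J + 1) ! := by
      rw [div_le_div_iff₀ (by positivity) (by positivity), Nat.factorial_succ, pow_succ]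
      push_cast
      have : 0 ≤ c ^ J * (J ! : ℝ) := by positivity
      nlinarith
    calc expTrunc (J + 1) c = expTrunc J c + c ^ (J + 1) / (J + 1) ! := sum_range_succ _ _
      _ ≤ 2 * c ^ J / J ! + c ^ (J + 1) / (J + 1) ! := by gcongr; exact ih (by linarith)
      _ ≤ c ^ (J + 1) / (J + 1) ! + c ^ (J + 1) / (J + 1) ! := by gcongr
      _ = 2 * c ^ (J + 1) / (J + 1) ! := by ring

lemma abs_exp_sub_expTrunc_le_two_mul (w : ℝ) (hw : |w| ≤ (J + 2) / 2) :
    |exp w - expTrunc J w| ≤ |w| ^ (J + 1) / (J + 1) ! * 2 := by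
  have hwc : ‖(w : ℂ)‖ / (J + 1).succ ≤ 1 / 2 := by
    rw [Complex.norm_real, Real.norm_eq_abs, div_le_iff₀ (by positivity)]
    push_cast
    linarith
  have := Complex.exp_bound' hwc
  convert this using 1 <;> norm_cast

lemma abs_exp_sub_expTrunc_le {w : ℝ} (hw : |w| ≤ J / 100) :
    |exp w - expTrunc J w| ≤ exp (-(2 * J + 1)) * exp w := by
  have hJ : (0 : ℝ) ≤ J := J.cast_nonneg
  -- Stirling's `(J+1)! ≥ ((J+1)/e)^{J+1}` is `pow_div_factorial_le_exp` at `x = J + 1`.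
  have hterm : |w| ^ (J + 1) / (J + 1) ! ≤ (exp 1 / 100) ^ (J + 1) :=
    calc |w| ^ (J + 1) / (J + 1) ! ≤ ((J + 1 : ℕ) / 100 : ℝ) ^ (J + 1) / (J + 1) ! := by
          gcongr; push_cast; linarith
      _ = ((J + 1 : ℕ) : ℝ) ^ (J + 1) / (J + 1) ! / 100 ^ (J + 1) := by rw [div_pow]; ring
      _ ≤ exp ((J + 1 : ℕ) : ℝ) / 100 ^ (J + 1) := by
          gcongr; exact pow_div_factorial_le_exp _ (Nat.cast_nonneg _) _
      _ = (exp 1 / 100) ^ (J + 1) := by rw [← exp_one_pow, div_pow]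
  have he : exp 1 / 100 ≤ exp (-3) := by
    have h81 : exp 1 ^ 4 ≤ 81 := by
      calc exp 1 ^ 4 ≤ 3 ^ 4 := by gcongr; exact exp_one_lt_three.le
        _ = 81 := by norm_num
    have hsplit : exp 1 = exp (-3) * exp 1 ^ 4 := by
      rw [exp_one_pow, ← exp_add]; norm_num
    rw [div_le_iff₀ (by norm_num)]
    nlinarith [exp_pos (-3)]
  calc |exp w - expTrunc J w| ≤ |w| ^ (J + 1) / (J + 1) ! * 2 :=
        abs_exp_sub_expTrunc_le_two_mul w (by linarith)
    _ ≤ exp (-3) ^ (J + 1) * exp 2 := by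
        gcongr
        · exact hterm.trans (by gcongr)
        · linarith [add_one_le_exp 2]
    _ = exp (-(2 * J + 1)) * exp (-J) := by
        rw [← exp_nat_mul, ← exp_add, ← exp_add]; push_cast; ring_nf
    _ ≤ exp (-(2 * J + 1)) * exp w := by
        gcongr; linarith [neg_abs_le w]

lemma abs_expTrunc_mul_rpow_le_of_abs_le {κ D : ℝ} (hκ : 1 ≤ κ) (hD : κ * |D| ≤ J / 100) :
    |expTrunc J (κ * D)| ^ (2 / κ) ≤ (1 + 12 * exp (-J)) * expTrunc J D ^ 2 := by
  set ε := exp (-(2 * J + 1))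
  set u := exp (-(J : ℝ))
  have hκD : |κ * D| ≤ J / 100 := by rwa [abs_mul, abs_of_pos (by linarith)]
  have hD' : |D| ≤ J / 100 := le_trans (by nlinarith [abs_nonneg D]) hD
  have hupper : |expTrunc J (κ * D)| ≤ (1 + ε) * exp (κ * D) := by
    have := abs_exp_sub_expTrunc_le hκD
    have := abs_sub_abs_le_abs_sub (expTrunc J (κ * D)) (exp (κ * D))
    rw [abs_sub_comm, abs_of_pos (exp_pos _)] at this
    linarith
  have hlower : (1 - ε) * exp D ≤ expTrunc J D := by
    linarith [(abs_le.1 (abs_exp_sub_expTrunc_le hD')).2]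
  have hu : u ≤ 1 := exp_le_one_iff.2 (by simp)
  have hε : 2 * ε ≤ u :=
    calc 2 * ε ≤ exp 1 * ε := by
          have : 2 ≤ exp 1 := by linarith [add_one_le_exp 1]
          exact mul_le_mul_of_nonneg_right this (exp_pos _).le
      _ = exp (-(2 * J)) := by rw [← exp_add]; ring_nf
      _ ≤ u := exp_le_exp.2 (by linarith [J.cast_nonneg (α := ℝ)])
  have hε0 : 0 < ε := exp_pos _
  calc |expTrunc J (κ * D)| ^ (2 / κ) ≤ ((1 + ε) * exp (κ * D)) ^ (2 / κ) := by gcongr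
    _ = (1 + ε) ^ (2 / κ) * exp (2 * D) := by
        rw [mul_rpow (by positivity) (exp_pos _).le, ← exp_mul]; field_simp
    _ ≤ (1 + ε) ^ (2 : ℝ) * exp (2 * D) := by
        gcongr
        · linarith
        · rw [div_le_iff₀ (by linarith)]; linarith
    _ ≤ (1 + 12 * u) * (1 - ε) ^ 2 * exp (2 * D) := by
        have hquarter : 1 / 4 ≤ (1 - ε) ^ 2 := by nlinarith
        have hkey : (1 + ε) ^ 2 ≤ (1 + 12 * u) * (1 - ε) ^ 2 := by
          nlinarith [mul_le_mul_of_nonneg_left hquarter (exp_pos (-(J : ℝ))).le]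
        rw [rpow_two]
        exact mul_le_mul_of_nonneg_right hkey (exp_pos _).le
    _ = (1 + 12 * u) * ((1 - ε) * exp D) ^ 2 := by
        rw [mul_pow, ← exp_nat_mul]; push_cast; ring
    _ ≤ (1 + 12 * u) * expTrunc J D ^ 2 := by
        have : 0 ≤ (1 - ε) * exp D := mul_nonneg (by linarith) (exp_pos _).le
        gcongr

lemma abs_expTrunc_mul_rpow_le_exp {κ D A : ℝ} (hκ : 0 < κ) (hD : |D| ≤ 2 * A) :
    |expTrunc J (κ * D)| ^ (2 / κ) ≤ exp (4 * A) :=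
  calc |expTrunc J (κ * D)| ^ (2 / κ) ≤ exp (κ * (2 * A)) ^ (2 / κ) := by
        gcongr
        calc |expTrunc J (κ * D)| ≤ expTrunc J (κ * |D|) :=
              abs_expTrunc_mul_le hκ.le D
          _ ≤ exp (κ * |D|) := expTrunc_le_exp (by positivity)
          _ ≤ exp (κ * (2 * A)) := by gcongr
    _ = exp (4 * A) := by rw [← exp_mul]; congr 1; field_simp; ring

lemma abs_expTrunc_mul_rpow_le_pow {κ D A : ℝ} (hκ : 0 < κ) (hJ : 2 * J ≤ κ * |D|)
    (hD : |D| ≤ 2 * A) :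
    |expTrunc J (κ * D)| ^ (2 / κ) ≤ (2 * (2 * κ * A) ^ J / J !) ^ (2 / κ) := by
  gcongr
  calc |expTrunc J (κ * D)| ≤ expTrunc J (κ * |D|) :=
        abs_expTrunc_mul_le hκ.le D
    _ ≤ 2 * (κ * |D|) ^ J / J ! := expTrunc_le_two_mul_pow_div_factorial hJ
    _ ≤ 2 * (2 * κ * A) ^ J / J ! := by
        gcongr 2 * ?_ ^ J / _
        linarith [mul_le_mul_of_nonneg_left hD hκ.le]

end expTrunc

section Majorant

open Real

variable {k y : ℝ} {Y : ℕ → ℝ} {J : ℕ → ℕ} {m n : ℕ} {l : ℤ} {t : ℝ}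

lemma sq_rpow_one_div (s κ : ℝ) : (s ^ 2) ^ (1 / κ) = |s| ^ (2 / κ) := by
  rw [← sq_abs, ← rpow_natCast, ← rpow_mul (abs_nonneg s)]
  congr 1
  push_cast
  ring

lemma Rml_rpow_eq :
    Rml k y Y J m l t ^ (1 / (k - 1)) =
      |expTrunc (J m) ((k - 1) * (Dpoly y Y m l t).re)| ^ (2 / (k - 1)) := by
  rw [Rml, ← sq_rpow_one_div, expTrunc]
  congr 2
  refine sum_congr rfl fun j _ => ?_
  rw [mul_pow]
  ring

lemma Uml_zero : Uml k y Y J m 0 l t = expTrunc (J m) (Dpoly y Y m l t).re ^ 2 := rfl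

lemma Iset_of_ne_zero (hn : n ≠ 0) :
    Iset k J m n =
      Set.Icc (2 ^ (n - 1) * J m / (100 * k)) (2 * (2 ^ (n - 1) * J m / (100 * k))) := by
  obtain ⟨n, rfl⟩ := Nat.exists_eq_succ_of_ne_zero hn
  rw [Iset, if_neg hn, Nat.succ_sub_one, pow_succ]
  ring_nf

lemma Rml_rpow_le_Uml_zero (hk : 2 < k) (hD : |(Dpoly y Y m l t).re| ∈ Iset k J m 0) :
    Rml k y Y J m l t ^ (1 / (k - 1)) ≤ (1 + 12 * exp (-(J m : ℝ))) * Uml k y Y J m 0 l t := by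
  rw [Iset, if_pos rfl] at hD
  rw [Rml_rpow_eq, Uml_zero]
  refine abs_expTrunc_mul_rpow_le_of_abs_le (by linarith) ?_
  calc (k - 1) * |(Dpoly y Y m l t).re| ≤ k * (J m / (100 * k)) := by
        gcongr
        · linarith
        · exact hD.2
    _ = J m / 100 := by field_simp

lemma Rml_rpow_le_Uml_of_ne_zero (hk : 2 < k) (hn : n ≠ 0)
    (hD : |(Dpoly y Y m l t).re| ∈ Iset k J m n) :
    Rml k y Y J m l t ^ (1 / (k - 1)) ≤ Uml k y Y J m n l t := by
  set A := 2 ^ (n - 1) * (J m : ℝ) / (100 * k)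
  have hA0 : 0 ≤ A := by positivity
  have hsInf : sInf (Iset k J m n) = A := by
    rw [Iset_of_ne_zero hn]
    exact csInf_Icc (by linarith)
  rw [Iset_of_ne_zero hn] at hD
  have hnorm : 1 ≤ ‖Dpoly y Y m l t / (A : ℂ)‖ ^ (2 * ⌈200 * k * (J m : ℝ)⌉₊) := by
    -- If `J m = 0` then `A = 0`, so `D / A = 0`, but then the exponent is `0` as well.
    rcases (J m).eq_zero_or_pos with hJ | hJ
    · simp [hJ]
    · have hApos : 0 < A := by positivity
      refine one_le_pow₀ ?_
      rw [norm_div, Complex.norm_real, Real.norm_eq_abs, abs_of_pos hApos, one_le_div hApos]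
      exact hD.1.trans (Complex.abs_re_le_norm _)
  rw [Rml_rpow_eq]
  simp only [Uml, if_neg hn, hsInf]
  split_ifs with hAJ
  · exact (abs_expTrunc_mul_rpow_le_exp (by linarith) hD.2).trans
      (le_mul_of_one_le_right (exp_pos _).le hnorm)
  · have hJ : 2 * (J m : ℝ) ≤ (k - 1) * |(Dpoly y Y m l t).re| := by
      nlinarith [hD.1, not_le.1 hAJ]
    have h := abs_expTrunc_mul_rpow_le_pow (by linarith) hJ hD.2
    exact h.trans (le_mul_of_one_le_right ((rpow_nonneg (abs_nonneg _) _).trans h) hnorm)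

end Majorant

/-- **Lemma 3.3**: if `|Re D_{m,ℓ}(t)| ∈ I_{n_m}^{(m)}`, then
`R_{m,ℓ}(t)^{1/(k-1)} ≤ (1 + C e^{-J_m}) U_{m,ℓ}(t)` for an absolute constant `C > 0`. -/
theorem Rml_rpow_le_Uml :
    ∃ C : ℝ, 0 < C ∧
    ∀ k : ℝ, 2 < k →
    ∃ C₀min : ℝ, ∀ C₀ : ℝ, C₀min ≤ C₀ →
    ∃ T₀ : ℝ, ∀ T : ℝ, T₀ ≤ T →
    ∀ x y : ℝ, 2 ≤ x → x ≤ T ^ ((1:ℝ)/2) → y = x ^ (1 / C₀) →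
    ∀ M : ℕ, 1 ≤ M → ∀ Y : ℕ → ℝ, ∀ J : ℕ → ℕ,
      Y 0 = 1 → Y M = y →
      (∀ m : ℕ, 2 ≤ m → m ≤ M → Y (m - 1) = Y m ^ ((1:ℝ)/20)) →
      y ^ (1 / (20 * Real.log (Real.log y) ^ 2)) ≤ Y 1 →
      Y 1 ≤ y ^ (1 / Real.log (Real.log y) ^ 2) →
      (J 1 : ℝ) = Real.log (Real.log y) ^ ((3:ℝ)/2) →
      (J M : ℝ) = C₀ / (10 ^ 5 * k) →
      (∀ m : ℕ, 2 ≤ m → m ≤ M - 1 → (J m : ℝ) = (J M : ℝ) + (M : ℝ) - (m : ℝ)) →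
      Real.exp (10 ^ 4 * k ^ 2) ≤ (J M : ℝ) →
      ∀ m : ℕ, 1 ≤ m → m ≤ M →
      ∀ l : ℤ, (|l| : ℝ) ≤ Real.log y / 2 →
      ∀ nm : ℕ, ∀ t : ℝ,
        |(Dpoly y Y m l t).re| ∈ Iset k J m nm →
        Rml k y Y J m l t ^ ((1:ℝ) / (k - 1)) ≤
          (1 + C * Real.exp (-(J m : ℝ))) * Uml k y Y J m nm l t := by
  refine ⟨12, by norm_num, fun k hk => ⟨0, fun _ _ => ⟨0, fun _ _ => ?_⟩⟩⟩
  intro _ _ _ _ _ _ _ Y J _ _ _ _ _ _ _ _ _ m _ _ l _ nm t hD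
  rcases eq_or_ne nm 0 with rfl | hn
  · exact Rml_rpow_le_Uml_zero hk hD
  · have hU := Rml_rpow_le_Uml_of_ne_zero hk hn hD
    have hC : 1 ≤ 1 + 12 * Real.exp (-(J m : ℝ)) := by linarith [Real.exp_pos (-(J m : ℝ))]
    exact hU.trans (le_mul_of_one_le_left ((Real.rpow_nonneg (by rw [Rml]; positivity) _).trans hU) hC)
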